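/- arXiv:1010.5288 — 2 statements merged into one kernel-verified Lean document; each statement's English description precedes it below -/
import Mathlib

section
/- For every n ≥ 3 and every v ∈ A_n: if 1 and 2 lie in different cycles of v then ℓ(v) = n - cyc(v), and if 1 and 2 lie in the same cycle of v then ℓ(v) = n - cyc(v) - 1. -/
/-- The set `T(A_n) = {(1 2)(i j) : 1 ≤ i < j ≤ n}` of A-transpositions, viewed inside
`Equiv.Perm (Fin n)` (letter `k` corresponds to `(k-1 : Fin n)`). -/
def ATrans (n : ℕ) : Set (Equiv.Perm (Fin n)) :=
  {v | ∃ (h1 : 1 < n) (i j : Fin n), i < j ∧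
       v = Equiv.swap (⟨0, by omega⟩ : Fin n) ⟨1, h1⟩ * Equiv.swap i j}

/-- Length of a permutation with respect to the generating set `T(A_n)`. -/
noncomputable def alen (n : ℕ) (v : Equiv.Perm (Fin n)) : ℕ :=
  sInf {k | ∃ l : List (Equiv.Perm (Fin n)),
    (∀ x ∈ l, x ∈ ATrans n) ∧ l.length = k ∧ l.prod = v}

/-- `cyc(v)`: the number of cycles of `v` including fixed points, i.e. the number of
orbits of the cyclic group generated by `v` acting on `Fin n`. -/
noncomputable def cycNum (n : ℕ) (v : Equiv.Perm (Fin n)) : ℕ :=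
  Nat.card (MulAction.orbitRel.Quotient (Subgroup.zpowers v) (Fin n))

/-!
Write `d(v) = n - cyc(v)`. Right multiplication by a transposition `(a b)` splits the cycle of
`v` through `a` and `b` if they lie in one cycle and merges their two cycles otherwise, so it
changes `d` by exactly one. Since `(1 2)(i j)(1 2)` is again a transposition,
`F(v) = min (d v) (d (v (1 2)))` changes by at most one under right multiplication by a
generator, and if `F(v) > 0` some generator lowers it (cancel a transposition from whichever of
`v`, `v (1 2)` realises the minimum). As `F(v) = 0` forces `v ∈ {1, (1 2)}`, this gives
`ℓ(v) = F(v)` for even `v`, and the split/merge rule for `(1 2)` evaluates `F(v)`.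
-/

open Equiv Equiv.Perm

theorem Setoid.card_quotient_eq_add_one {α : Type*} [Finite α] {r s : Setoid α}
    (hle : s ≤ r) {a b : α} (hab : r a b) (hnab : ¬ s a b)
    (hcover : ∀ x, r a x → s a x ∨ s b x) (hout : ∀ x y, r x y → ¬ r a x → s x y) :
    Nat.card (Quotient s) = Nat.card (Quotient r) + 1 := by
  classical
  let f : α → Option (Quotient r) := fun x => if s b x then none else some (Quotient.mk r x)
  have hf : ∀ x y, s x y → f x = f y := by
    intro x y hxy
    by_cases hbx : s b x
    · simp [f, hbx, s.trans hbx hxy]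
    · have hby : ¬ s b y := fun hby => hbx (s.trans hby (s.symm hxy))
      simp only [f, hbx, hby, if_false, Option.some_inj]
      exact Quotient.sound (hle hxy)
  refine (Nat.card_congr (Equiv.ofBijective (Quotient.lift f hf) ⟨?_, ?_⟩)).trans
    Finite.card_option
  · rintro ⟨x⟩ ⟨y⟩ hxy
    change f x = f y at hxy
    refine Quotient.sound ?_
    by_cases hbx : s b x <;> by_cases hby : s b y <;>
      simp only [f, hbx, hby, ↓reduceIte, reduceCtorEq, Option.some_inj] at hxy
    · exact s.trans (s.symm hbx) hby
    · have hrxy : r x y := Quotient.exact hxy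
      by_cases hax : r a x
      · exact s.trans (s.symm ((hcover x hax).resolve_right hbx))
          ((hcover y (r.trans hax hrxy)).resolve_right hby)
      · exact hout x y hrxy hax
  · rintro (_ | ⟨⟨x⟩⟩)
    · exact ⟨Quotient.mk s b, by simp [f]⟩
    · by_cases hbx : s b x
      · refine ⟨Quotient.mk s a, ?_⟩
        have hba : ¬ s b a := fun h => hnab (s.symm h)
        simp only [Quotient.lift_mk, f, hba, ↓reduceIte]
        exact congrArg some <| Quotient.sound (r.trans hab (hle hbx))
      · exact ⟨Quotient.mk s x, by simp [f, hbx]; rfl⟩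

namespace Equiv.Perm

variable {α : Type*}

theorem SameCycle.mem_of_mapsTo [Finite α] {f : Perm α} {s : Set α} {x y : α}
    (hs : Set.MapsTo f s s) (h : f.SameCycle x y) (hx : x ∈ s) : y ∈ s := by
  obtain ⟨i, rfl⟩ := h.exists_nat_pow_eq
  exact hs.perm_pow i hx

noncomputable def numCycles (v : Perm α) : ℕ := Nat.card (Quotient (SameCycle.setoid v))

theorem numCycles_one : (1 : Perm α).numCycles = Nat.card α := by
  refine (Nat.card_congr (Equiv.ofBijective (Quotient.mk _) ⟨fun x y hxy => ?_,
    Quotient.mk_surjective⟩)).symm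
  exact sameCycle_one.mp (Quotient.exact hxy)

theorem numCycles_le [Finite α] (v : Perm α) : v.numCycles ≤ Nat.card α :=
  Nat.card_le_card_of_surjective _ Quotient.mk_surjective

theorem orbitRel_zpowers (v : Perm α) :
    MulAction.orbitRel (Subgroup.zpowers v) α = SameCycle.setoid v := by
  ext x y
  rw [MulAction.orbitRel_apply, MulAction.mem_orbit_iff]
  change _ ↔ v.SameCycle x y
  rw [sameCycle_comm]
  constructor
  · rintro ⟨⟨g, i, rfl⟩, hg⟩
    exact ⟨i, hg⟩
  · rintro ⟨i, hi⟩
    exact ⟨⟨v ^ i, i, rfl⟩, hi⟩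

noncomputable def cycleDeficit (v : Perm α) : ℕ := Nat.card α - v.numCycles

theorem cycleDeficit_one : (1 : Perm α).cycleDeficit = 0 := by
  simp [cycleDeficit, numCycles_one]

variable [DecidableEq α] {v : Perm α} {a b : α}

theorem sameCycle_swap_apply (h : v.SameCycle a b) (x : α) : v.SameCycle x (swap a b x) := by
  rcases eq_or_ne x a with rfl | hxa
  · simpa using h
  rcases eq_or_ne x b with rfl | hxb
  · simpa using h.symm
  · rw [swap_apply_of_ne_of_ne hxa hxb]

variable [Finite α]

theorem SameCycle.of_mul_swap (h : v.SameCycle a b) {x y : α}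
    (hxy : (v * swap a b).SameCycle x y) : v.SameCycle x y := by
  refine hxy.mem_of_mapsTo (s := {z | v.SameCycle x z}) (fun z hz => ?_) (SameCycle.refl v x)
  exact sameCycle_apply_right.mpr (hz.trans (sameCycle_swap_apply h z))

theorem SameCycle.mul_swap_of_not_sameCycle (h : v.SameCycle a b) {x y : α}
    (hxy : v.SameCycle x y) (hax : ¬ v.SameCycle a x) : (v * swap a b).SameCycle x y := by
  refine (hxy.mem_of_mapsTo (s := {z | (v * swap a b).SameCycle x z ∧ ¬ v.SameCycle a z})
    (fun z ⟨hxz, haz⟩ => ?_) ⟨SameCycle.refl _ x, hax⟩).1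
  have hza : z ≠ a := by rintro rfl; exact haz (SameCycle.refl v z)
  have hzb : z ≠ b := by rintro rfl; exact haz h
  have hvz : v z = (v * swap a b) z := by rw [mul_apply, swap_apply_of_ne_of_ne hza hzb]
  exact ⟨hvz ▸ sameCycle_apply_right.mpr hxz, mt sameCycle_apply_right.mp haz⟩

theorem sameCycle_mul_swap_or_sameCycle_mul_swap {x : α} (hax : v.SameCycle a x) :
    (v * swap a b).SameCycle a x ∨ (v * swap a b).SameCycle b x := by
  set w := v * swap a b
  let s : Set α := {z | w.SameCycle a z ∨ w.SameCycle b z}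
  have hw : Set.MapsTo w s s := fun _ hz =>
    hz.imp sameCycle_apply_right.mpr sameCycle_apply_right.mpr
  have hswap : Set.MapsTo (swap a b) s s := by
    intro z hz
    rcases eq_or_ne z a with rfl | hza
    · simp [s, SameCycle.refl]
    rcases eq_or_ne z b with rfl | hzb
    · simp [s, SameCycle.refl]
    · rwa [swap_apply_of_ne_of_ne hza hzb]
  have hv : v = w * swap a b := by simp [w, mul_assoc]
  have hvs : Set.MapsTo v s s := by rw [hv, coe_mul]; exact hw.comp hswap
  exact hax.mem_of_mapsTo (s := s) hvs (Or.inl (SameCycle.refl w a))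

theorem sameCycle_mul_swap_of_not_sameCycle (h : ¬ v.SameCycle a b) :
    (v * swap a b).SameCycle a b := by
  set w := v * swap a b
  have hwb : w b = v a := by simp [w]
  let s : Set α := {z | w.SameCycle b z ∨ ¬ v.SameCycle a z}
  have hs : Set.MapsTo v s s := by
    rintro z (hbz | haz)
    · rcases eq_or_ne z a with rfl | hza
      · exact Or.inl (hwb ▸ sameCycle_apply_right.mpr (SameCycle.refl w b))
      rcases eq_or_ne z b with rfl | hzb
      · exact Or.inr (mt sameCycle_apply_right.mp h)
      · have hvz : v z = w z := by simp [w, swap_apply_of_ne_of_ne hza hzb]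
        exact Or.inl (hvz ▸ sameCycle_apply_right.mpr hbz)
    · exact Or.inr (mt sameCycle_apply_right.mp haz)
  have hva : v a ∈ s := Or.inl (hwb ▸ sameCycle_apply_right.mpr (SameCycle.refl w b))
  have has : a ∈ s := (sameCycle_apply_left.mpr (SameCycle.refl v a)).mem_of_mapsTo hs hva
  exact (has.resolve_right (not_not.mpr (SameCycle.refl v a))).symm

theorem not_sameCycle_mul_swap (hab : a ≠ b) (h : v.SameCycle a b) :
    ¬ (v * swap a b).SameCycle a b := by
  have hex : ∃ k, 0 < k ∧ (v ^ k) a = b := by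
    obtain ⟨k, hk, -, hkb⟩ := h.exists_pow_eq''
    exact ⟨k, hk, hkb⟩
  obtain ⟨hk0, hkb⟩ := Nat.find_spec hex
  set k := Nat.find hex
  have hmin : ∀ i, 0 < i → i < k → (v ^ i) a ≠ a ∧ (v ^ i) a ≠ b := by
    refine fun i hi hik =>
      ⟨fun hia => Nat.find_min hex (m := k - i) (by omega) ⟨by omega, ?_⟩,
        fun hib => Nat.find_min hex hik ⟨hi, hib⟩⟩
    calc (v ^ (k - i)) a = (v ^ (k - i)) ((v ^ i) a) := by rw [hia]
      _ = b := by rw [← mul_apply, ← pow_add, Nat.sub_add_cancel hik.le, hkb]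
  -- for the least `k > 0` with `v^k a = b`, the points `v^i a`, `0 < i ≤ k`, form a cycle of
  -- `v * swap a b` through `b` which misses `a`
  let s : Set α := {x | ∃ i, 0 < i ∧ i ≤ k ∧ (v ^ i) a = x}
  have hs : Set.MapsTo (v * swap a b) s s := by
    rintro _ ⟨i, hi, hik, rfl⟩
    rcases hik.lt_or_eq with hik | rfl
    · obtain ⟨hia, hib⟩ := hmin i hi hik
      exact ⟨i + 1, by omega, hik, by
        rw [mul_apply, swap_apply_of_ne_of_ne hia hib, pow_succ', mul_apply]⟩
    · exact ⟨1, one_pos, hk0, by rw [hkb, mul_apply, swap_apply_right, pow_one]⟩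
  have has : a ∉ s := by
    rintro ⟨i, hi, hik, hia⟩
    rcases hik.lt_or_eq with hik | rfl
    · exact (hmin i hi hik).1 hia
    · exact hab (hia.symm.trans hkb)
  exact fun hw => has (hw.symm.mem_of_mapsTo hs ⟨k, hk0, le_rfl, hkb⟩)

theorem numCycles_mul_swap_of_sameCycle (hab : a ≠ b) (h : v.SameCycle a b) :
    (v * swap a b).numCycles = v.numCycles + 1 :=
  Setoid.card_quotient_eq_add_one (fun _ _ => h.of_mul_swap) h (not_sameCycle_mul_swap hab h)
    (fun _ => sameCycle_mul_swap_or_sameCycle_mul_swap) (fun _ _ => h.mul_swap_of_not_sameCycle)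

theorem numCycles_mul_swap_of_not_sameCycle (hab : a ≠ b) (h : ¬ v.SameCycle a b) :
    v.numCycles = (v * swap a b).numCycles + 1 := by
  simpa [mul_assoc] using
    numCycles_mul_swap_of_sameCycle hab (sameCycle_mul_swap_of_not_sameCycle h)

theorem cycleDeficit_mul_swap_of_sameCycle (hab : a ≠ b) (h : v.SameCycle a b) :
    (v * swap a b).cycleDeficit + 1 = v.cycleDeficit := by
  have := numCycles_le (v * swap a b)
  rw [numCycles_mul_swap_of_sameCycle hab h] at this
  simp only [cycleDeficit, numCycles_mul_swap_of_sameCycle hab h]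
  omega

theorem cycleDeficit_mul_swap_of_not_sameCycle (hab : a ≠ b) (h : ¬ v.SameCycle a b) :
    (v * swap a b).cycleDeficit = v.cycleDeficit + 1 := by
  have := numCycles_le v
  rw [numCycles_mul_swap_of_not_sameCycle hab h] at this
  simp only [cycleDeficit, numCycles_mul_swap_of_not_sameCycle hab h]
  omega

theorem cycleDeficit_mul_swap_le (v : Perm α) (a b : α) :
    (v * swap a b).cycleDeficit ≤ v.cycleDeficit + 1 := by
  rcases eq_or_ne a b with rfl | hab
  · simp [← one_def]
  by_cases h : v.SameCycle a b
  · have := cycleDeficit_mul_swap_of_sameCycle hab h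
    omega
  · exact (cycleDeficit_mul_swap_of_not_sameCycle hab h).le

theorem exists_cycleDeficit_mul_swap_succ_eq (hv : v ≠ 1) :
    ∃ x y, x ≠ y ∧ (v * swap x y).cycleDeficit + 1 = v.cycleDeficit := by
  obtain ⟨x, hx⟩ : ∃ x, v x ≠ x := by
    by_contra! h
    exact hv (Equiv.ext h)
  exact ⟨x, v x, Ne.symm hx, cycleDeficit_mul_swap_of_sameCycle (Ne.symm hx)
    (sameCycle_apply_right.mpr (SameCycle.refl v x))⟩

theorem cycleDeficit_eq_zero : v.cycleDeficit = 0 ↔ v = 1 := by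
  refine ⟨fun h => ?_, fun h => h ▸ cycleDeficit_one⟩
  by_contra hv
  obtain ⟨x, y, -, hxy⟩ := exists_cycleDeficit_mul_swap_succ_eq hv
  omega

end Equiv.Perm

section MinCycleDeficit

variable {α : Type*} [DecidableEq α] [Finite α]

noncomputable def minCycleDeficit (a b : α) (v : Perm α) : ℕ :=
  min v.cycleDeficit (v * swap a b).cycleDeficit

theorem minCycleDeficit_mul_swap_mul_swap_le (a b i j : α) (v : Perm α) :
    minCycleDeficit a b (v * (swap a b * swap i j)) ≤ minCycleDeficit a b v + 1 := by
  have h₁ : (v * (swap a b * swap i j)).cycleDeficit ≤ (v * swap a b).cycleDeficit + 1 := by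
    rw [← mul_assoc]
    exact cycleDeficit_mul_swap_le _ i j
  have h₂ : (v * (swap a b * swap i j) * swap a b).cycleDeficit ≤ v.cycleDeficit + 1 := by
    have hconj : swap a b * swap i j * swap a b = swap (swap a b i) (swap a b j) := by
      rw [swap_apply_apply, swap_inv]
    rw [mul_assoc, hconj]
    exact cycleDeficit_mul_swap_le v _ _
  simp only [minCycleDeficit]
  omega

theorem minCycleDeficit_prod_le (a b : α) (l : List (Perm α))
    (hl : ∀ t ∈ l, ∃ i j, t = swap a b * swap i j) :
    minCycleDeficit a b l.prod ≤ l.length := by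
  induction l using List.reverseRecOn with
  | nil => simp [minCycleDeficit, cycleDeficit_one]
  | append_singleton l t ih =>
    obtain ⟨i, j, rfl⟩ := hl t (by simp)
    have := minCycleDeficit_mul_swap_mul_swap_le a b i j l.prod
    have := ih fun t ht => hl t (by simp [ht])
    simp only [List.prod_append, List.prod_singleton, List.length_append, List.length_singleton]
    omega

theorem minCycleDeficit_eq_zero {a b : α} {v : Perm α} (h : minCycleDeficit a b v = 0) :
    v = 1 ∨ v = swap a b := by
  rcases Nat.min_eq_zero_iff.mp h with h | h
  · exact Or.inl (cycleDeficit_eq_zero.mp h)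
  · exact Or.inr (mul_eq_one_iff_eq_inv.mp (cycleDeficit_eq_zero.mp h) |>.trans (swap_inv a b))

theorem exists_minCycleDeficit_lt {a b : α} {v : Perm α} (h : minCycleDeficit a b v ≠ 0) :
    ∃ u i j, i ≠ j ∧ v = u * (swap a b * swap i j) ∧
      minCycleDeficit a b u < minCycleDeficit a b v := by
  set s := swap a b
  have hss : s * s = 1 := swap_mul_self a b
  rcases min_cases v.cycleDeficit (v * s).cycleDeficit with ⟨hmin, -⟩ | ⟨hmin, -⟩
  · have hv : v ≠ 1 := fun hv => h (by rw [minCycleDeficit, hmin, hv, cycleDeficit_one])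
    obtain ⟨x, y, hxy, hlt⟩ := exists_cycleDeficit_mul_swap_succ_eq hv
    refine ⟨v * swap x y * s, x, y, hxy, by simp [s, mul_assoc], ?_⟩
    calc minCycleDeficit a b (v * swap x y * s)
        ≤ (v * swap x y * s * s).cycleDeficit := min_le_right _ _
      _ < v.cycleDeficit := by rw [mul_assoc _ s, hss, mul_one]; omega
      _ = minCycleDeficit a b v := hmin.symm
  · have hv : v * s ≠ 1 := fun hv => h (by rw [minCycleDeficit, hmin, hv, cycleDeficit_one])
    obtain ⟨x, y, hxy, hlt⟩ := exists_cycleDeficit_mul_swap_succ_eq hv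
    refine ⟨v * s * swap x y, s⁻¹ x, s⁻¹ y, s⁻¹.injective.ne hxy, ?_, ?_⟩
    · rw [← swap_mul_eq_mul_swap]
      simp [s, mul_assoc]
    calc minCycleDeficit a b (v * s * swap x y)
        ≤ (v * s * swap x y).cycleDeficit := min_le_left _ _
      _ < (v * s).cycleDeficit := by omega
      _ = minCycleDeficit a b v := hmin.symm

omit [Finite α] in
theorem exists_list_prod_eq [Fintype α] {a b : α} (hab : a ≠ b) (v : Perm α)
    (hv : sign v = 1) :
    ∃ l : List (Perm α), (∀ t ∈ l, ∃ i j, i ≠ j ∧ t = swap a b * swap i j) ∧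
      l.length ≤ minCycleDeficit a b v ∧ l.prod = v := by
  by_cases h : minCycleDeficit a b v = 0
  · refine ⟨[], by simp, by simp, ?_⟩
    refine ((minCycleDeficit_eq_zero h).resolve_right fun hvs => ?_).symm
    simp [hvs, sign_swap hab] at hv
  obtain ⟨u, i, j, hij, rfl, hlt⟩ := exists_minCycleDeficit_lt h
  have hu : sign u = 1 := by simpa [sign_swap hab, sign_swap hij] using hv
  obtain ⟨l, hl, hlen, rfl⟩ := exists_list_prod_eq hab u hu
  refine ⟨l ++ [swap a b * swap i j], fun t ht => ?_, by simp; omega, by simp⟩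
  rcases List.mem_append.mp ht with ht | ht
  · exact hl t ht
  · exact ⟨i, j, hij, List.mem_singleton.mp ht⟩
termination_by minCycleDeficit a b v

end MinCycleDeficit

theorem cycNum_eq_numCycles (n : ℕ) (v : Perm (Fin n)) : cycNum n v = v.numCycles := by
  rw [cycNum, MulAction.orbitRel.Quotient, orbitRel_zpowers, numCycles]

theorem mem_ATrans_iff {n : ℕ} (h : 1 < n) {t : Perm (Fin n)} :
    t ∈ ATrans n ↔ ∃ i j, i ≠ j ∧ t = swap ⟨0, by omega⟩ ⟨1, h⟩ * swap i j := by
  refine ⟨fun ⟨_, i, j, hij, ht⟩ => ⟨i, j, hij.ne, ht⟩, fun ⟨i, j, hij, ht⟩ => ?_⟩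
  rcases hij.lt_or_gt with hij | hij
  · exact ⟨h, i, j, hij, ht⟩
  · exact ⟨h, j, i, hij, by rw [ht, swap_comm i]⟩

theorem alen_eq_minCycleDeficit {n : ℕ} (h : 1 < n) {v : Perm (Fin n)} (hv : sign v = 1) :
    alen n v = minCycleDeficit ⟨0, by omega⟩ ⟨1, h⟩ v := by
  have h01 : (⟨0, by omega⟩ : Fin n) ≠ ⟨1, h⟩ := by simp [Fin.ext_iff]
  obtain ⟨l, hl, hlen, hprod⟩ := exists_list_prod_eq h01 v hv
  have hword : l.length ∈ {k | ∃ l : List (Perm (Fin n)),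
      (∀ x ∈ l, x ∈ ATrans n) ∧ l.length = k ∧ l.prod = v} :=
    ⟨l, fun t ht => (mem_ATrans_iff h).mpr (hl t ht), rfl, hprod⟩
  refine le_antisymm ((Nat.sInf_le hword).trans hlen) (le_csInf ⟨_, hword⟩ ?_)
  rintro _ ⟨l', hl', rfl, rfl⟩
  refine minCycleDeficit_prod_le _ _ l' fun t ht => ?_
  obtain ⟨i, j, -, ht⟩ := (mem_ATrans_iff h).mp (hl' t ht)
  exact ⟨i, j, ht⟩

/-- For `n ≥ 3` and `v ∈ A_n`: if `1, 2` lie in different cycles of `v` then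
`ℓ(v) = n - cyc(v)`, and if they lie in the same cycle then `ℓ(v) = n - cyc(v) - 1`. -/
theorem stmt_10 (n : ℕ) (hn : 3 ≤ n) (v : Equiv.Perm (Fin n))
    (hv : v ∈ alternatingGroup (Fin n)) :
    (¬ v.SameCycle ⟨0, by omega⟩ ⟨1, by omega⟩ → alen n v = n - cycNum n v) ∧
    (v.SameCycle ⟨0, by omega⟩ ⟨1, by omega⟩ → alen n v = n - cycNum n v - 1) := by
  have h01 : (⟨0, by omega⟩ : Fin n) ≠ ⟨1, by omega⟩ := by simp [Fin.ext_iff]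
  rw [alen_eq_minCycleDeficit (by omega) (mem_alternatingGroup.mp hv), cycNum_eq_numCycles,
    minCycleDeficit]
  have hcard : n - v.numCycles = v.cycleDeficit := by rw [cycleDeficit, Nat.card_fin]
  refine ⟨fun hdiff => ?_, fun hsame => ?_⟩
  · have := cycleDeficit_mul_swap_of_not_sameCycle h01 hdiff
    omega
  · have := cycleDeficit_mul_swap_of_sameCycle h01 hsame
    omega
end

section
/- For every n ≥ 2, the generating polynomial of length on A_n factors as ∑_{v ∈ A_n} x^{ℓ(v)} = ∑_{k=0}^{n} a(n,k)·x^k = (1+2x)(1+3x)⋯(1+(n-1)x) = ∏_{t=2}^{n-1} (1+tx), as an identity of polynomials. -/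
/-- `a(n,m)`: the number of elements of `A_n` of length `m` w.r.t. `T(A_n)`. -/
noncomputable def aCount (n m : ℕ) : ℕ :=
  Nat.card {v : Equiv.Perm (Fin n) // v ∈ alternatingGroup (Fin n) ∧ alen n v = m}

/-!
Write `s = (1 2)`. Each element of `T(A_n)` is `s * t` with `t` a transposition, and
transpositions are closed under conjugation, so `v` is a product of `k` elements of `T(A_n)` iff
`s⁻ᵏ v` is a product of `k` transpositions, i.e. iff its absolute length `ℓ_T` (`n` minus the
number of cycles) is at most `k` and has the parity of `k`. For even `v` this gives
`ℓ(v) = min (ℓ_T v) (ℓ_T (v s))`. Right multiplication by `s` swaps even and odd permutations and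
preserves this minimum, so the sum over `A_n` is half of `∑_{w ∈ S_n} x ^ min (ℓ_T w) (ℓ_T (w s))`.
Taking a letter `c ∉ {1, 2}` out of its cycle, `w = (c p) * w'` with `w' c = c`, raises `ℓ_T` by one
unless `p = c`; this contributes the factor `1 + (n - 1) x`, and induction down to `S_2` gives
`2 ∏_{t=2}^{n-1} (1 + t x)`.
-/

open Equiv Finset Polynomial Pointwise

namespace Set

variable {G : Type*}

lemma mem_pow_iff_exists_list [Monoid G] {T : Set G} {k : ℕ} {g : G} :
    g ∈ T ^ k ↔ ∃ l : List G, (∀ x ∈ l, x ∈ T) ∧ l.length = k ∧ l.prod = g := by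
  induction k generalizing g with
  | zero => simp [eq_comm]
  | succ k ih =>
    rw [pow_succ', mem_mul]
    constructor
    · rintro ⟨t, ht, h, hh, rfl⟩
      obtain ⟨l, hl, rfl, rfl⟩ := ih.1 hh
      exact ⟨t :: l, by simpa [ht] using hl, rfl, rfl⟩
    · rintro ⟨_ | ⟨t, l⟩, hl, hlen, rfl⟩
      · simp at hlen
      · simp only [List.mem_cons, forall_eq_or_imp] at hl
        exact ⟨t, hl.1, l.prod, ih.2 ⟨l, hl.2, by simpa using hlen, rfl⟩, rfl⟩

lemma mem_smul_pow_iff [Group G] {T : Set G} (hT : ∀ g, ∀ t ∈ T, g * t * g⁻¹ ∈ T) (s : G)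
    {k : ℕ} {g : G} : g ∈ (s • T) ^ k ↔ (s ^ k)⁻¹ * g ∈ T ^ k := by
  induction k generalizing g with
  | zero => simp
  | succ k ih =>
    simp only [pow_succ', mem_mul, mem_smul_set, smul_eq_mul]
    constructor
    · rintro ⟨_, ⟨t, ht, rfl⟩, h, hh, rfl⟩
      exact ⟨(s ^ k)⁻¹ * t * (s ^ k)⁻¹⁻¹, hT _ t ht, _, ih.1 hh, by group⟩
    · rintro ⟨t, ht, h, hh, hg⟩
      refine ⟨_, ⟨s ^ k * t * (s ^ k)⁻¹, hT _ t ht, rfl⟩, s ^ k * h, ih.2 (by simpa using hh), ?_⟩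
      rw [← mul_right_inj (s * s ^ k)⁻¹, ← hg]
      group

end Set

namespace Equiv.Perm

variable {α : Type*} [DecidableEq α]

lemma swap_mul_swap_of_ne {x y z : α} (hxz : x ≠ z) (hyz : y ≠ z) :
    swap x y * swap y z = swap x z * swap x y := by
  have h := swap_apply_apply (swap x y) y z
  rw [swap_apply_right, swap_apply_of_ne_of_ne hxz.symm hyz.symm, swap_inv] at h
  rw [h, mul_assoc, swap_mul_self, mul_one]

lemma formPerm_cons_append_cons (x y : α) (A B : List α) (h : (x :: A ++ y :: B).Nodup) :
    (x :: A ++ y :: B).formPerm = swap x y * (x :: A).formPerm * (y :: B).formPerm := by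
  induction A generalizing x with
  | nil => simp [List.formPerm_cons_cons]
  | cons a A ih =>
    have h' := h
    simp only [List.cons_append, List.nodup_cons, List.mem_cons, List.mem_append] at h'
    rw [List.cons_append, List.cons_append, List.formPerm_cons_cons, ← List.cons_append,
      ih a (List.nodup_cons.1 h).2, List.formPerm_cons_cons, ← mul_assoc, ← mul_assoc,
      swap_mul_swap_of_ne (by tauto) (by tauto), mul_assoc (swap x y)]

variable [Fintype α]

/-- The absolute length: `card α` minus the number of cycles, fixed points included. -/
def absLength (w : Perm α) : ℕ := w.cycleType.sum - Multiset.card w.cycleType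

lemma two_mul_card_cycleType_le_sum (w : Perm α) :
    2 * Multiset.card w.cycleType ≤ w.cycleType.sum := by
  simpa [mul_comm] using Multiset.card_nsmul_le_sum (a := 2) fun _ h ↦ two_le_of_mem_cycleType h

@[simp] lemma absLength_one : absLength (1 : Perm α) = 0 := by simp [absLength]

lemma absLength_eq_zero_iff {w : Perm α} : absLength w = 0 ↔ w = 1 := by
  refine ⟨fun h ↦ ?_, fun h ↦ h ▸ absLength_one⟩
  have := two_mul_card_cycleType_le_sum w
  rw [← cycleType_eq_zero, ← Multiset.card_eq_zero]
  unfold absLength at h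
  omega

lemma absLength_lt_card [Nonempty α] (w : Perm α) : absLength w < Fintype.card α := by
  by_cases hw : w = 1
  · simpa [hw] using Fintype.card_pos
  have : Multiset.card w.cycleType ≠ 0 := by simpa using hw
  have := sum_cycleType_le w
  have := two_mul_card_cycleType_le_sum w
  unfold absLength
  omega

lemma sign_eq_neg_one_pow_absLength (w : Perm α) : sign w = (-1) ^ absLength w := by
  have := two_mul_card_cycleType_le_sum w
  rw [sign_of_cycleType, absLength,
    show w.cycleType.sum + Multiset.card w.cycleType
      = w.cycleType.sum - Multiset.card w.cycleType + 2 * Multiset.card w.cycleType by omega,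
    pow_add, pow_mul]
  simp

lemma even_absLength_iff {w : Perm α} : Even (absLength w) ↔ sign w = 1 := by
  rw [sign_eq_neg_one_pow_absLength, neg_one_pow_eq_one_iff_even (by decide)]

lemma absLength_mul_of_disjoint {σ τ : Perm α} (h : Disjoint σ τ) :
    absLength (σ * τ) = absLength σ + absLength τ := by
  have := two_mul_card_cycleType_le_sum σ
  have := two_mul_card_cycleType_le_sum τ
  simp only [absLength, h.cycleType_mul, Multiset.sum_add, Multiset.card_add]
  omega

lemma absLength_mul_comm (σ τ : Perm α) : absLength (σ * τ) = absLength (τ * σ) := by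
  have : τ * σ = σ⁻¹ * (σ * τ) * σ⁻¹⁻¹ := by group
  rw [this, absLength, absLength, cycleType_conj]

lemma IsCycle.absLength {σ : Perm α} (h : IsCycle σ) : absLength σ = σ.support.card - 1 := by
  simp [Perm.absLength, h.cycleType]

lemma absLength_formPerm {l : List α} (hl : l.Nodup) : absLength l.formPerm = l.length - 1 := by
  rcases le_or_gt l.length 1 with h | h
  · rw [(List.formPerm_eq_one_iff l hl).2 h, absLength_one]
    omega
  · rw [(List.isCycle_formPerm hl h).absLength, List.support_formPerm_of_nodup l hl,
      List.toFinset_card_of_nodup hl]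
    rintro x rfl
    simp at h

lemma absLength_formPerm_mul {l : List α} (hl : l.Nodup) {r : Perm α} (hr : ∀ z ∈ l, r z = z) :
    absLength (l.formPerm * r) = l.length - 1 + absLength r := by
  have hd : Disjoint l.formPerm r := fun z ↦
    if hz : z ∈ l then .inr (hr z hz) else .inl (List.formPerm_apply_of_notMem hz)
  rw [absLength_mul_of_disjoint hd, absLength_formPerm hl]

lemma exists_toList_eq_cons {w : Perm α} {x : α} (hx : x ∈ w.support) :
    ∃ A, w.toList x = x :: A := by
  cases h : w.toList x with
  | nil => exact absurd hx (toList_eq_nil_iff.1 h)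
  | cons a A =>
    have := toList_getElem_zero w x hx
    simp only [h, List.getElem_cons_zero] at this
    exact ⟨A, this ▸ rfl⟩

lemma absLength_swap_mul_of_sameCycle {w : Perm α} {x y : α} (hxy : x ≠ y)
    (h : w.SameCycle x y) : absLength (swap x y * w) + 1 = absLength w := by
  have hx : x ∈ w.support := mem_support.2 fun hx ↦ hxy (h.eq_of_left hx)
  obtain ⟨A, hA⟩ := exists_toList_eq_cons hx
  obtain ⟨A₁, A₂, rfl⟩ := List.append_of_mem <|
    (List.mem_cons.1 (hA ▸ mem_toList_iff.2 ⟨h, hx⟩)).resolve_left hxy.symm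
  rw [← List.cons_append] at hA
  set r := (w.cycleOf x)⁻¹ * w
  have hw : w = (x :: A₁ ++ y :: A₂).formPerm * r := by
    rw [← hA, formPerm_toList, mul_inv_cancel_left]
  have hnd : (x :: A₁ ++ y :: A₂).Nodup := hA ▸ nodup_toList w x
  have hr : ∀ z ∈ x :: A₁ ++ y :: A₂, r z = z := by
    intro z hz
    rw [← hA, mem_toList_iff] at hz
    rw [mul_apply, inv_eq_iff_eq, cycleOf_apply, if_pos hz.1]
  -- `swap x y` cuts the cycle `(x A₁ y A₂)` into `(x A₁)` and `(y A₂)`.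
  have hsplit : swap x y * w = (x :: A₁).formPerm * ((y :: A₂).formPerm * r) := by
    conv_lhs => rw [hw, formPerm_cons_append_cons x y A₁ A₂ hnd]
    simp only [mul_assoc, swap_mul_self_mul]
  have hdisj := List.disjoint_of_nodup_append hnd
  rw [hsplit, absLength_formPerm_mul (List.nodup_append.1 hnd).1, absLength_formPerm_mul
    (List.nodup_append.1 hnd).2.1, hw, absLength_formPerm_mul hnd hr]
  · simp only [List.length_append, List.length_cons]
    omega
  · exact fun z hz ↦ hr z (List.mem_append_right _ hz)
  · intro z hz
    rw [mul_apply, hr z (List.mem_append_left _ hz),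
      List.formPerm_apply_of_notMem (fun hz' ↦ hdisj hz hz')]

/-- From `x`, the permutation `swap x y * w` runs along the `w`-cycle of `x` and, where `w` would
return to `x`, continues to `y`. -/
lemma sameCycle_swap_mul_of_not_sameCycle {w : Perm α} {x y : α} (h : ¬ w.SameCycle x y) :
    (swap x y * w).SameCycle x y := by
  set m := Function.minimalPeriod w x
  have hm : 0 < m := Function.minimalPeriod_pos_of_mem_periodicPts (w.injective.mem_periodicPts x)
  have hagree : ∀ i < m, ((swap x y * w) ^ i) x = (w ^ i) x := by
    intro i
    induction i with
    | zero => simp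
    | succ i ih =>
      intro hi
      have hne : (w ^ (i + 1)) x ≠ x := by
        have := Function.not_isPeriodicPt_of_pos_of_lt_minimalPeriod i.succ_ne_zero hi
        rwa [Function.IsPeriodicPt, Function.IsFixedPt, iterate_eq_pow] at this
      rw [pow_succ', mul_apply, ih (by omega), mul_apply, ← mul_apply w, ← pow_succ',
        swap_apply_of_ne_of_ne hne fun hy ↦ h ⟨(i + 1 : ℕ), by rwa [zpow_natCast]⟩]
  obtain ⟨k, hk⟩ : ∃ k, m = k + 1 := ⟨m - 1, by omega⟩
  refine ⟨m, ?_⟩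
  rw [zpow_natCast, hk, pow_succ', mul_apply, hagree k (by omega), mul_apply,
    ← mul_apply w, ← pow_succ', ← hk, ← iterate_eq_pow,
    Function.iterate_minimalPeriod, swap_apply_left]

lemma absLength_swap_mul_of_not_sameCycle {w : Perm α} {x y : α} (hxy : x ≠ y)
    (h : ¬ w.SameCycle x y) : absLength (swap x y * w) = absLength w + 1 := by
  have := absLength_swap_mul_of_sameCycle hxy (sameCycle_swap_mul_of_not_sameCycle h)
  rwa [swap_mul_self_mul, eq_comm] at this

lemma absLength_swap_mul_le (w : Perm α) {x y : α} (hxy : x ≠ y) :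
    absLength (swap x y * w) ≤ absLength w + 1 := by
  by_cases h : w.SameCycle x y
  · have := absLength_swap_mul_of_sameCycle hxy h
    omega
  · exact (absLength_swap_mul_of_not_sameCycle hxy h).le

lemma IsSwap.absLength_eq {σ : Perm α} (h : σ.IsSwap) : absLength σ = 1 := by
  simp [absLength, isSwap_iff_cycleType.1 h]

lemma IsSwap.conj {σ : Perm α} (h : σ.IsSwap) (g : Perm α) : (g * σ * g⁻¹).IsSwap :=
  isSwap_iff_cycleType.2 (cycleType_conj.trans (isSwap_iff_cycleType.1 h))

theorem mem_isSwap_pow_iff [Nontrivial α] {w : Perm α} {k : ℕ} :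
    w ∈ {σ : Perm α | σ.IsSwap} ^ k ↔ absLength w ≤ k ∧ sign w = (-1) ^ k := by
  induction k generalizing w with
  | zero => simp +contextual [absLength_eq_zero_iff]
  | succ k ih =>
    rw [pow_succ', Set.mem_mul]
    constructor
    · rintro ⟨_, ⟨x, y, hxy, rfl⟩, h, hh, rfl⟩
      obtain ⟨hlen, hsign⟩ := ih.1 hh
      refine ⟨(absLength_swap_mul_le h hxy).trans (by omega), ?_⟩
      rw [sign_mul, sign_swap hxy, hsign, pow_succ', neg_one_mul]
    · rintro ⟨hlen, hsign⟩
      obtain ⟨t, ht, htw⟩ : ∃ t : Perm α, t.IsSwap ∧ absLength (t * w) ≤ k := by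
        by_cases hw : w = 1
        · obtain ⟨a, b, hab⟩ := exists_pair_ne α
          refine ⟨swap a b, ⟨a, b, hab, rfl⟩, ?_⟩
          rcases k with _ | k
          · simp [hw] at hsign
          · simp [hw, IsSwap.absLength_eq ⟨a, b, hab, rfl⟩]
        · obtain ⟨x, hx⟩ : ∃ x, w x ≠ x := by
            by_contra! h
            exact hw (Equiv.ext h)
          have := absLength_swap_mul_of_sameCycle (Ne.symm hx)
            (sameCycle_apply_right.2 (SameCycle.refl w x))
          exact ⟨swap x (w x), ⟨x, w x, Ne.symm hx, rfl⟩, by omega⟩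
      refine ⟨t, ht, t * w, ih.2 ⟨htw, ?_⟩, ?_⟩
      · rw [sign_mul, ht.sign_eq, hsign, pow_succ']
        simp
      · obtain ⟨x, y, -, rfl⟩ := ht
        exact swap_mul_self_mul x y w

lemma absLength_extendDomain {β : Type*} [DecidableEq β] [Fintype β] {p : β → Prop}
    [DecidablePred p] (f : α ≃ Subtype p) (w : Perm α) :
    absLength (w.extendDomain f) = absLength w := by
  simp [absLength, cycleType_extendDomain]

lemma absLength_optionCongr (e : Perm α) : absLength e.optionCongr = absLength e := by
  have : e.optionCongr = e.extendDomain (optionIsSomeEquiv α).symm := by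
    refine Equiv.ext fun x ↦ ?_
    rcases x with _ | a
    · simp [extendDomain_apply_not_subtype]
    · simpa using (extendDomain_apply_image e (optionIsSomeEquiv α).symm a).symm
  rw [this, absLength_extendDomain]

lemma absLength_permCongr {β : Type*} [DecidableEq β] [Fintype β] (e : α ≃ β) (w : Perm α) :
    absLength (e.permCongr w) = absLength w := by
  have : e.permCongr w = w.extendDomain (e.trans (subtypeUnivEquiv fun _ ↦ trivial).symm) := by
    ext x
    simp [extendDomain_apply_subtype, permCongr_apply]
  rw [this, absLength_extendDomain]

lemma absLength_decomposeOption_symm (p : Option α) (e : Perm α) :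
    absLength (decomposeOption.symm (p, e)) = absLength e + if p = none then 0 else 1 := by
  rcases p with _ | c
  · simp [← Perm.one_def, absLength_optionCongr]
  · have hfix : Function.IsFixedPt e.optionCongr none := by simp [Function.IsFixedPt]
    rw [decomposeOption_symm_apply, absLength_swap_mul_of_not_sameCycle (by simp)
      fun h ↦ Option.some_ne_none c (h.eq_of_left hfix).symm, absLength_optionCongr]
    simp

lemma min_absLength_decomposeOption_symm (p : Option α) (e : Perm α) (a b : α) :
    min (absLength (decomposeOption.symm (p, e)))
        (absLength (decomposeOption.symm (p, e) * swap (some a) (some b)))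
      = min (absLength e) (absLength (e * swap a b)) + if p = none then 0 else 1 := by
  have : decomposeOption.symm (p, e) * swap (some a) (some b)
      = decomposeOption.symm (p, e * swap a b) := by
    simp only [decomposeOption_symm_apply, mul_assoc, ← optionCongr_swap]
    exact congrArg _ (optionCongr_trans (swap a b) e).symm
  rw [this, absLength_decomposeOption_symm, absLength_decomposeOption_symm, min_add_add_right]

lemma min_absLength_permCongr {β : Type*} [DecidableEq β] [Fintype β] (e : α ≃ β) (w : Perm α)
    (a b : α) :
    min (absLength (e.permCongr w)) (absLength (e.permCongr w * swap (e a) (e b)))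
      = min (absLength w) (absLength (w * swap a b)) := by
  rw [← symm_trans_swap_trans, ← permCongr_def, ← permCongr_mul, absLength_permCongr,
    absLength_permCongr]

lemma sum_X_pow_min_absLength_of_card_eq_two {a b : α} (hab : a ≠ b)
    (hcard : Fintype.card α = 2) :
    ∑ w : Perm α, (X : ℤ[X]) ^ min (absLength w) (absLength (w * swap a b)) = 2 := by
  have hzero : ∀ w : Perm α, min (absLength w) (absLength (w * swap a b)) = 0 := by
    intro w
    have : Nonempty α := ⟨a⟩
    have h₁ := absLength_lt_card w
    have h₂ := absLength_lt_card (w * swap a b)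
    have hsign := sign_eq_neg_one_pow_absLength (w * swap a b)
    rw [sign_mul, sign_swap hab, sign_eq_neg_one_pow_absLength w] at hsign
    rw [hcard] at h₁ h₂
    interval_cases absLength w <;> interval_cases absLength (w * swap a b) <;> simp_all
  simp [hzero, Fintype.card_perm, hcard]

lemma sum_X_pow_min_absLength_option (a b : α) :
    ∑ v : Perm (Option α), (X : ℤ[X]) ^ min (absLength v) (absLength (v * swap (some a) (some b)))
      = (1 + C (Fintype.card α : ℤ) * X) *
          ∑ e : Perm α, (X : ℤ[X]) ^ min (absLength e) (absLength (e * swap a b)) := by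
  calc _ = ∑ pe : Option α × Perm α, (X : ℤ[X]) ^ (if pe.1 = none then 0 else 1) *
          X ^ min (absLength pe.2) (absLength (pe.2 * swap a b)) := by
        rw [← decomposeOption.symm.sum_comp]
        refine sum_congr rfl fun pe _ ↦ ?_
        rw [min_absLength_decomposeOption_symm, pow_add, mul_comm]
    _ = (∑ p : Option α, (X : ℤ[X]) ^ (if p = none then 0 else 1)) *
          ∑ e : Perm α, (X : ℤ[X]) ^ min (absLength e) (absLength (e * swap a b)) := by
        rw [Finset.sum_mul_sum, Fintype.sum_prod_type]
    _ = _ := by simp [Fintype.sum_option]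

theorem sum_X_pow_min_absLength {a b : α} (hab : a ≠ b) :
    ∑ w : Perm α, (X : ℤ[X]) ^ min (absLength w) (absLength (w * swap a b))
      = 2 * ∏ t ∈ Icc 2 (Fintype.card α - 1), (1 + C (t : ℤ) * X) := by
  obtain ⟨n, hn⟩ : ∃ n, Fintype.card α = n + 2 :=
    ⟨Fintype.card α - 2, by have := Fintype.one_lt_card_iff.2 ⟨a, b, hab⟩; omega⟩
  induction n generalizing α with
  | zero => simp [hn, sum_X_pow_min_absLength_of_card_eq_two hab hn]
  | succ n ih =>
    obtain ⟨c, -, hc⟩ := exists_mem_notMem_of_card_lt_card (s := {a, b}) (t := univ)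
      (by rw [card_univ, hn]; exact (card_le_two).trans_lt (by omega))
    simp only [mem_insert, mem_singleton, not_or] at hc
    have hcard : Fintype.card {x // x ≠ c} = n + 2 := by
      have := Fintype.card_congr (optionSubtypeNe c)
      rw [Fintype.card_option, hn] at this
      omega
    let a' : {x // x ≠ c} := ⟨a, Ne.symm hc.1⟩
    let b' : {x // x ≠ c} := ⟨b, Ne.symm hc.2⟩
    have hab' : a' ≠ b' := fun h ↦ hab (congrArg Subtype.val h)
    have hrelabel : ∀ v : Perm (Option {x // x ≠ c}),
        min (absLength ((optionSubtypeNe c).permCongr v))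
            (absLength ((optionSubtypeNe c).permCongr v * swap a b))
          = min (absLength v) (absLength (v * swap (some a') (some b'))) :=
      fun v ↦ min_absLength_permCongr _ v (some a') (some b')
    rw [← (optionSubtypeNe c).permCongr.sum_comp]
    simp only [hrelabel]
    rw [sum_X_pow_min_absLength_option, ih hab' hcard, hcard, hn,
      show n + 1 + 2 - 1 = n + 1 + 1 from rfl, prod_Icc_succ_top (show 2 ≤ n + 1 + 1 by omega)]
    ac_rfl

lemma sum_eq_two_nsmul_sum_sign_eq_one {M : Type*} [AddCommMonoid M] {a b : α} (hab : a ≠ b)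
    {g : Perm α → M} (hg : ∀ w, g (w * swap a b) = g w) :
    ∑ w, g w = 2 • ∑ w with sign w = 1, g w := by
  rw [← sum_filter_add_sum_filter_not univ (fun w ↦ sign w = 1), two_nsmul]
  congr 1
  refine sum_nbij' (· * swap a b) (· * swap a b) ?_ ?_ ?_ ?_ ?_ <;> intro w hw
  · simp_all [sign_mul, sign_swap hab, Int.units_ne_iff_eq_neg]
  · simp_all [sign_mul, sign_swap hab]
  · simp [mul_assoc]
  · simp [mul_assoc]
  · exact (hg w).symm

end Equiv.Perm

lemma Nat.sInf_setOf_ite_even_le {a b : ℕ} (ha : Even a) (hb : Odd b) :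
    sInf {k | (if Even k then a else b) ≤ k} = min a b := by
  have hb' : ¬ Even b := Nat.not_even_iff_odd.2 hb
  refine le_antisymm (Nat.sInf_le ?_) (le_csInf ⟨a, by simp [ha]⟩ fun k hk ↦ ?_)
  · rcases le_total a b with h | h
    · simp [min_eq_left h, ha]
    · simp [min_eq_right h, hb']
  · change (if Even k then a else b) ≤ k at hk
    split_ifs at hk <;> omega

lemma Polynomial.sum_X_pow_eq_sum_card_mul_X_pow {ι R : Type*} [Fintype ι] [CommSemiring R]
    (f : ι → ℕ) {N : ℕ} (hf : ∀ i, f i < N) :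
    ∑ i, (X : R[X]) ^ f i = ∑ k ∈ range N, C (Nat.card {i // f i = k} : R) * X ^ k := by
  rw [← sum_fiberwise_of_maps_to (g := f) (t := range N) fun i _ ↦ mem_range.2 (hf i)]
  refine sum_congr rfl fun k _ ↦ ?_
  rw [sum_congr rfl fun i hi ↦ by rw [(mem_filter.1 hi).2], sum_const, Nat.card_eq_fintype_card,
    Fintype.card_subtype, nsmul_eq_mul, map_natCast]

lemma ATrans_eq_swap_smul (n : ℕ) (hn : 1 < n) :
    ATrans n = swap (⟨0, by omega⟩ : Fin n) ⟨1, hn⟩ • {σ : Perm (Fin n) | σ.IsSwap} := by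
  ext g
  rw [Set.mem_smul_set]
  constructor
  · rintro ⟨-, i, j, hij, rfl⟩
    exact ⟨swap i j, ⟨i, j, hij.ne, rfl⟩, rfl⟩
  · rintro ⟨_, ⟨i, j, hij, rfl⟩, rfl⟩
    rcases hij.lt_or_gt with h | h
    · exact ⟨hn, i, j, h, rfl⟩
    · exact ⟨hn, j, i, h, by rw [smul_eq_mul, swap_comm i j]⟩

open Equiv.Perm in
theorem alen_eq_min (n : ℕ) (hn : 1 < n) {v : Perm (Fin n)} (hv : sign v = 1) :
    alen n v = min (absLength v) (absLength (v * swap ⟨0, by omega⟩ ⟨1, hn⟩)) := by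
  set s : Perm (Fin n) := swap ⟨0, by omega⟩ ⟨1, hn⟩
  have hs : sign s = -1 := sign_swap (by simp [Fin.ext_iff])
  have : Nontrivial (Fin n) := Fin.nontrivial_iff_two_le.2 hn
  have hmem : ∀ k, v ∈ ATrans n ^ k ↔ absLength ((s ^ k)⁻¹ * v) ≤ k := by
    intro k
    rw [ATrans_eq_swap_smul n hn, Set.mem_smul_pow_iff (fun g t ht ↦ ht.conj g),
      mem_isSwap_pow_iff, and_iff_left]
    rw [Perm.sign_mul, map_inv, map_pow, hs, hv, mul_one, Int.units_inv_eq_self]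
  have hlen : ∀ k,
      absLength ((s ^ k)⁻¹ * v) = if Even k then absLength v else absLength (v * s) := by
    intro k
    obtain ⟨m, rfl | rfl⟩ := Nat.even_or_odd' k
    · simp [pow_mul, sq, s]
    · simp [pow_succ, pow_mul, s, absLength_mul_comm]
  have hodd : Odd (absLength (v * s)) :=
    Nat.not_even_iff_odd.1 (even_absLength_iff.not.2 (by rw [Perm.sign_mul, hv, hs]; decide))
  simp only [alen, ← Set.mem_pow_iff_exists_list, hmem, hlen]
  exact Nat.sInf_setOf_ite_even_le (even_absLength_iff.2 hv) hodd

open Equiv.Perm in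
lemma sum_alternatingGroup_X_pow_alen_eq_sum_aCount (n : ℕ) (hn : 1 < n) :
    ∑ v : {v : Perm (Fin n) // v ∈ alternatingGroup (Fin n)}, (X : ℤ[X]) ^ alen n v
      = ∑ k ∈ range (n + 1), C (aCount n k : ℤ) * X ^ k := by
  refine (sum_X_pow_eq_sum_card_mul_X_pow (N := n + 1) _ fun v ↦ ?_).trans
    (sum_congr rfl fun k _ ↦ ?_)
  · have : Nonempty (Fin n) := ⟨⟨0, by omega⟩⟩
    have := (v : Perm (Fin n)).absLength_lt_card
    rw [Fintype.card_fin] at this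
    rw [alen_eq_min n hn (mem_alternatingGroup.1 v.2)]
    omega
  · rw [aCount, ← Nat.card_congr (subtypeSubtypeEquivSubtypeInter _ _)]

open Equiv.Perm in
theorem sum_alternatingGroup_X_pow_alen (n : ℕ) (hn : 1 < n) :
    ∑ v : {v : Perm (Fin n) // v ∈ alternatingGroup (Fin n)}, (X : ℤ[X]) ^ alen n v
      = ∏ t ∈ Icc 2 (n - 1), (1 + C (t : ℤ) * X) := by
  have hs : (⟨0, by omega⟩ : Fin n) ≠ ⟨1, hn⟩ := by simp [Fin.ext_iff]
  have heven : ∑ w with sign w = 1, (X : ℤ[X]) ^ min (absLength w) (absLength (w * swap _ _))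
      = ∑ v : {v : Perm (Fin n) // v ∈ alternatingGroup (Fin n)}, (X : ℤ[X]) ^ alen n v :=
    (sum_subtype _ (by simp [mem_alternatingGroup]) _).trans
      (sum_congr rfl fun v _ ↦ by rw [alen_eq_min n hn (mem_alternatingGroup.1 v.2)])
  have hsum := sum_X_pow_min_absLength hs
  rw [sum_eq_two_nsmul_sum_sign_eq_one hs fun w ↦ by rw [mul_swap_mul_self, min_comm], heven,
    Fintype.card_fin, nsmul_eq_mul] at hsum
  exact mul_left_cancel₀ two_ne_zero hsum

open Polynomial in
open scoped Classical in
/-- For `n ≥ 2`, `∑_{v ∈ A_n} x^{ℓ(v)} = ∑_{k=0}^n a(n,k) x^k = ∏_{t=2}^{n-1} (1 + t x)`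
as polynomials. -/
theorem stmt_13 (n : ℕ) (hn : 2 ≤ n) :
    (∑ v : {v : Equiv.Perm (Fin n) // v ∈ alternatingGroup (Fin n)},
        (X : Polynomial ℤ) ^ alen n (v : Equiv.Perm (Fin n)))
      = ∑ k ∈ Finset.range (n + 1), C ((aCount n k : ℤ)) * X ^ k ∧
    (∑ k ∈ Finset.range (n + 1), C ((aCount n k : ℤ)) * X ^ k)
      = ∏ t ∈ Finset.Icc 2 (n - 1), (1 + C ((t : ℤ)) * X) := by
  rw [← sum_alternatingGroup_X_pow_alen_eq_sum_aCount n hn]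
  exact ⟨rfl, sum_alternatingGroup_X_pow_alen n hn⟩
end
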